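/- Let G be a plane triangulation and U ⊆ V(G) a set of vertices inducing a tree whose complement V(G) \ U also induces a tree. Then U dominates all faces of G, i.e., every face of G is incident with a vertex of U, and likewise every face is incident with a vertex of V(G) \ U. -/
import Mathlib


/-- A combinatorial model of a plane triangulation. -/
structure PlaneTriangulation (V : Type*) [Fintype V] [DecidableEq V] where
  G : SimpleGraph V
  faces : Finset (Finset V)
  face_card : ∀ f ∈ faces, f.card = 3
  face_clique : ∀ f ∈ faces, ∀ u ∈ f, ∀ v ∈ f, u ≠ v → G.Adj u v
  edge_two_faces : ∀ u v : V, G.Adj u v →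
    (faces.filter (fun f => u ∈ f ∧ v ∈ f)).card = 2

lemma no_triangle_of_acyclic {W : Type*} {H : SimpleGraph W} (hH : H.IsAcyclic)
    {a b c : W} (hab : H.Adj a b) (hbc : H.Adj b c) (hca : H.Adj c a) : False := by
  have hcyc : (SimpleGraph.Walk.cons hab (SimpleGraph.Walk.cons hbc
      (SimpleGraph.Walk.cons hca SimpleGraph.Walk.nil))).IsCycle := by
    rw [SimpleGraph.Walk.cons_isCycle_iff]
    constructor
    · simp [SimpleGraph.Walk.isPath_def, hab.ne, hbc.ne, hca.ne, (hca.symm).ne,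
        hab.ne', hbc.ne', hca.ne']
    · simp only [SimpleGraph.Walk.edges_cons, SimpleGraph.Walk.edges_nil,
        List.mem_cons, List.not_mem_nil, or_false]
      rintro (h | h) <;> rw [Sym2.eq_iff] at h <;>
        rcases h with ⟨h1, h2⟩ | ⟨h1, h2⟩ <;> subst_vars <;>
        first
        | exact hab.ne rfl
        | exact hbc.ne rfl
        | exact hca.ne rfl
  exact hH _ hcyc

lemma face_meets {V : Type*} [Fintype V] [DecidableEq V]
    (T : PlaneTriangulation V) (S : Set V)
    (hS : (T.G.induce S).IsAcyclic) :
    ∀ f ∈ T.faces, ∃ v ∈ f, v ∉ S := by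
  intro f hf
  by_contra h
  push_neg at h
  obtain ⟨a, b, c, hab, hbc, hac, hfabc⟩ := Finset.card_eq_three.mp (T.face_card f hf)
  have ha : a ∈ f := by rw [hfabc]; simp
  have hb : b ∈ f := by rw [hfabc]; simp
  have hc : c ∈ f := by rw [hfabc]; simp
  have hAab : (T.G.induce S).Adj ⟨a, h a ha⟩ ⟨b, h b hb⟩ :=
    T.face_clique f hf a ha b hb hab
  have hAbc : (T.G.induce S).Adj ⟨b, h b hb⟩ ⟨c, h c hc⟩ :=
    T.face_clique f hf b hb c hc hac
  have hAca : (T.G.induce S).Adj ⟨c, h c hc⟩ ⟨a, h a ha⟩ :=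
    T.face_clique f hf c hc a ha (Ne.symm hbc)
  exact no_triangle_of_acyclic hS hAab hAbc hAca

/-- If `U` induces a tree in a plane triangulation and its complement also induces a
tree, then `U` dominates all faces, and likewise the complement dominates all faces. -/
theorem tree_and_cotree_dominate_faces {V : Type*} [Fintype V] [DecidableEq V]
    (T : PlaneTriangulation V) (U : Set V)
    (hU : (T.G.induce U).IsTree) (hUc : (T.G.induce Uᶜ).IsTree) :
    (∀ f ∈ T.faces, ∃ v ∈ f, v ∈ U) ∧ (∀ f ∈ T.faces, ∃ v ∈ f, v ∉ U) := by
  constructor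
  · intro f hf
    obtain ⟨v, hv, hv'⟩ := face_meets T Uᶜ hUc.IsAcyclic f hf
    exact ⟨v, hv, by simpa using hv'⟩
  · intro f hf
    exact face_meets T U hU.IsAcyclic f hf
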